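/- Let $d$ be a circular decomposable metric on $X = \{1,\dots,n\}$ and let $a \prec b \prec c$ in the cyclic order. If $d(a,c-1) \leq d(a,c)$ then $d(b,c-1) \leq d(b,c)$, and if $d(a+1,c) \leq d(a,c)$ then $d(a+1,b) \leq d(a,b)$. -/
import Mathlib


open Finset

/-- Position of `b` relative to `a` in the clockwise cyclic order on `ZMod n`
(number of clockwise steps from `a` to `b`). -/
def cpos {n : ℕ} (a b : ZMod n) : ℕ := (b - a).val

/-- `a ≺ b ≺ c` in the cyclic order. -/
def btwSS {n : ℕ} (a b c : ZMod n) : Prop := 0 < cpos a b ∧ cpos a b < cpos a c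

/-- `a ≺ b ⪯ c` in the cyclic order. -/
def btwSW {n : ℕ} (a b c : ZMod n) : Prop := 0 < cpos a b ∧ cpos a b ≤ cpos a c

/-- `a ⪯ b ≺ c` in the cyclic order. -/
def btwWS {n : ℕ} (a b c : ZMod n) : Prop := cpos a b < cpos a c

/-- `a ⪯ b ⪯ c` in the cyclic order. -/
def btwWW {n : ℕ} (a b c : ZMod n) : Prop := cpos a b ≤ cpos a c

/-- Circular sum `⊕∑_{i=a}^{b} f i`: the sum of `f` over the indices from `a` to `b`
inclusive, traversed cyclically (wrapping around mod `n`). -/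
noncomputable def csum {n : ℕ} (f : ZMod n → ℝ) (a b : ZMod n) : ℝ :=
  ∑ k ∈ Finset.range ((b - a).val + 1), f (a + (k : ZMod n))

/-- The circular decomposable metric determined by isolation indices `α`:
`d a b = ⊕∑_{i=a+1}^{b} ⊕∑_{j=b+1}^{a} α i j` for `a ≠ b`, and `d a a = 0`. -/
noncomputable def dd {n : ℕ} (α : ZMod n → ZMod n → ℝ) (a b : ZMod n) : ℝ :=
  if a = b then 0 else csum (fun i => csum (fun j => α i j) (b + 1) a) (a + 1) b

section Aux
set_option linter.unusedSectionVars false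
variable {n : ℕ} [NeZero n]

lemma val_eqc {x : ZMod n} {e : ℕ} (hx : x = (e : ZMod n)) (he : e < n) : x.val = e :=
  hx ▸ ZMod.val_cast_of_lt he

lemma csum_nonneg {f : ZMod n → ℝ} (hf : ∀ x, 0 ≤ f x) (a b : ZMod n) : 0 ≤ csum f a b :=
  Finset.sum_nonneg fun _ _ => hf _

lemma csum_self (f : ZMod n → ℝ) (a : ZMod n) : csum f a a = f a := by
  simp [csum]

lemma csum_add (f g : ZMod n → ℝ) (a b : ZMod n) :
    csum (fun x => f x + g x) a b = csum f a b + csum g a b := by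
  simp [csum, Finset.sum_add_distrib]

lemma csum_split (f : ZMod n → ℝ) {a m b : ZMod n} (h : (m - a).val < (b - a).val) :
    csum f a b = csum f a m + csum f (m + 1) b := by
  have hb : (b - a).val < n := ZMod.val_lt _
  have key : (b - (m + 1)).val = (b - a).val - ((m - a).val + 1) := by
    apply val_eqc ?_ (by omega)
    push_cast [Nat.cast_sub (by omega : (m - a).val + 1 ≤ (b - a).val)]
    rw [ZMod.natCast_zmod_val, ZMod.natCast_zmod_val]
    ring
  have hsum : (b - a).val + 1 = ((m - a).val + 1) + ((b - (m + 1)).val + 1) := by omega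
  rw [csum, hsum, Finset.sum_range_add]
  congr 1
  apply Finset.sum_congr rfl
  intro k _
  congr 1
  push_cast
  rw [ZMod.natCast_zmod_val]
  ring

lemma dd_nonneg {α : ZMod n → ZMod n → ℝ} (hnn : ∀ i j, 0 ≤ α i j) (a b : ZMod n) :
    0 ≤ dd α a b := by
  unfold dd
  split
  · exact le_refl 0
  · exact csum_nonneg (fun i => csum_nonneg (fun j => hnn i j) _ _) _ _

lemma dd_diff_right (α : ZMod n → ZMod n → ℝ) (hsym : ∀ i j, α i j = α j i)
    {x c : ZMod n} (hx1 : x ≠ c) (hx2 : x ≠ c - 1) :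
    dd α x c - dd α x (c - 1) = csum (fun j => α c j) (c + 1) x - csum (fun i => α c i) (x + 1) (c - 1) := by
  have hn : (c - x).val < n := ZMod.val_lt _
  have hD0 : (c - x).val ≠ 0 := fun h => hx1 (by
    have := (ZMod.val_eq_zero _).1 h; exact (sub_eq_zero.mp this).symm)
  have hD1 : (c - x).val ≠ 1 := by
    intro h
    apply hx2
    have : c - x = ((1 : ℕ) : ZMod n) := by rw [← h, ZMod.natCast_zmod_val]
    have : c - x = 1 := by simpa using this
    have : x = c - 1 := by linear_combination -this
    exact this
  set D := (c - x).val with hDdef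
  have hD2 : 2 ≤ D := by omega
  have hcast : (D : ZMod n) = c - x := ZMod.natCast_zmod_val _
  -- outer split of dd α x c at c - 1
  have h1 : (c - 1 - (x + 1)).val < (c - (x + 1)).val := by
    have e1 : (c - 1 - (x + 1)).val = D - 2 := by
      apply val_eqc ?_ (by omega)
      push_cast [Nat.cast_sub (by omega : 2 ≤ D)]
      rw [hcast]; ring
    have e2 : (c - (x + 1)).val = D - 1 := by
      apply val_eqc ?_ (by omega)
      push_cast [Nat.cast_sub (by omega : 1 ≤ D)]
      rw [hcast]; ring
    omega
  have hout : dd α x c = csum (fun i => csum (fun j => α i j) (c + 1) x) (x + 1) (c - 1)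
      + csum (fun j => α c j) (c + 1) x := by
    rw [dd, if_neg hx1, csum_split _ h1, sub_add_cancel, csum_self]
  -- inner split of dd α x (c-1)
  have h2 : ∀ i : ZMod n, csum (fun j => α i j) (c - 1 + 1) x
      = α i c + csum (fun j => α i j) (c + 1) x := by
    intro i
    rw [sub_add_cancel, csum_split _ (show ((c : ZMod n) - c).val < (x - c).val by
      simp only [sub_self, ZMod.val_zero]
      have : (x - c).val ≠ 0 := fun h => hx1 (sub_eq_zero.mp ((ZMod.val_eq_zero _).1 h))
      omega), csum_self]
  have hin : dd α x (c - 1) = csum (fun i => α i c) (x + 1) (c - 1)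
      + csum (fun i => csum (fun j => α i j) (c + 1) x) (x + 1) (c - 1) := by
    rw [dd, if_neg hx2, ← csum_add]
    exact Finset.sum_congr rfl fun k _ => h2 _
  rw [hout, hin]
  have : csum (fun i => α i c) (x + 1) (c - 1) = csum (fun i => α c i) (x + 1) (c - 1) := by
    unfold csum; exact Finset.sum_congr rfl fun k _ => hsym _ _
  rw [this]; ring

lemma dd_diff_left (α : ZMod n → ZMod n → ℝ) (hsym : ∀ i j, α i j = α j i)
    {a y : ZMod n} (hy1 : y ≠ a) (hy2 : y ≠ a + 1) :
    dd α a y - dd α (a + 1) y = csum (fun j => α (a + 1) j) (y + 1) a - csum (fun i => α (a + 1) i) (a + 1 + 1) y := by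
  have hne1 : a ≠ y := hy1.symm
  have hne2 : a + 1 ≠ y := hy2.symm
  -- outer split of dd α a y at a + 1
  have h1 : ((a + 1 : ZMod n) - (a + 1)).val < (y - (a + 1)).val := by
    simp only [sub_self, ZMod.val_zero]
    have : (y - (a + 1)).val ≠ 0 := fun h => hy2 (sub_eq_zero.mp ((ZMod.val_eq_zero _).1 h))
    omega
  have hout : dd α a y = csum (fun j => α (a + 1) j) (y + 1) a
      + csum (fun i => csum (fun j => α i j) (y + 1) a) (a + 1 + 1) y := by
    rw [dd, if_neg hne1, csum_split _ h1, csum_self]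
  -- inner split of dd α (a+1) y
  have hE0 : (a - y).val ≠ 0 := fun h => hy1 (sub_eq_zero.mp ((ZMod.val_eq_zero _).1 h)).symm
  have hcast : ((a - y).val : ZMod n) = a - y := ZMod.natCast_zmod_val _
  have h2 : ∀ i : ZMod n, csum (fun j => α i j) (y + 1) (a + 1)
      = csum (fun j => α i j) (y + 1) a + α i (a + 1) := by
    intro i
    rw [csum_split (fun j => α i j) (show ((a : ZMod n) - (y + 1)).val < (a + 1 - (y + 1)).val by
      have e1 : ((a : ZMod n) - (y + 1)).val = (a - y).val - 1 := by
        apply val_eqc ?_ (by have := ZMod.val_lt (a - y); omega)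
        push_cast [Nat.cast_sub (by omega : 1 ≤ (a - y).val)]
        rw [hcast]; ring
      have e2 : ((a : ZMod n) + 1 - (y + 1)).val = (a - y).val := by
        apply val_eqc ?_ (ZMod.val_lt _)
        rw [hcast]; ring
      omega), csum_self]
  have hin : dd α (a + 1) y = csum (fun i => csum (fun j => α i j) (y + 1) a) (a + 1 + 1) y
      + csum (fun i => α i (a + 1)) (a + 1 + 1) y := by
    rw [dd, if_neg hne2, ← csum_add]
    exact Finset.sum_congr rfl fun k _ => h2 _
  rw [hout, hin]
  have : csum (fun i => α i (a + 1)) (a + 1 + 1) y = csum (fun i => α (a + 1) i) (a + 1 + 1) y := by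
    unfold csum; exact Finset.sum_congr rfl fun k _ => hsym _ _
  rw [this]; ring

end Aux

/-- For `a ≺ b ≺ c`: if `d(a,c-1) ≤ d(a,c)` then `d(b,c-1) ≤ d(b,c)`, and
if `d(a+1,c) ≤ d(a,c)` then `d(a+1,b) ≤ d(a,b)`. -/
theorem stmt5 {n : ℕ} [NeZero n] (α : ZMod n → ZMod n → ℝ)
    (hnn : ∀ i j, 0 ≤ α i j) (hsym : ∀ i j, α i j = α j i) (hdiag : ∀ i, α i i = 0)
    (a b c : ZMod n) (habc : btwSS a b c) :
    (dd α a (c - 1) ≤ dd α a c → dd α b (c - 1) ≤ dd α b c) ∧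
    (dd α (a + 1) c ≤ dd α a c → dd α (a + 1) b ≤ dd α a b) := by
  obtain ⟨hA, hAC⟩ := habc
  unfold cpos at hA hAC
  set A := (b - a).val with hAdef
  set C := (c - a).val with hCdef
  have hCn : C < n := ZMod.val_lt _
  have hcastA : (A : ZMod n) = b - a := ZMod.natCast_zmod_val _
  have hcastC : (C : ZMod n) = c - a := ZMod.natCast_zmod_val _
  have hnn0 : ((n : ℕ) : ZMod n) = 0 := ZMod.natCast_self n
  have hca : c - a ≠ 0 := fun h => by
    rw [h, ZMod.val_zero] at hCdef; omega
  have hba : b - a ≠ 0 := fun h => by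
    rw [h, ZMod.val_zero] at hAdef; omega
  have hac : a ≠ c := fun h => hca (by rw [h, sub_self])
  have hab : b ≠ a := sub_ne_zero.mp hba
  have vcb : (c - b).val = C - A := by
    apply val_eqc ?_ (by omega)
    push_cast [Nat.cast_sub (by omega : A ≤ C)]
    rw [hcastA, hcastC]; ring
  have hbc : b ≠ c := by
    intro h
    rw [h, sub_self, ZMod.val_zero] at vcb; omega
  have vca1 : (c - 1 - a).val = C - 1 := by
    apply val_eqc ?_ (by omega)
    push_cast [Nat.cast_sub (by omega : 1 ≤ C)]
    rw [hcastC]; ring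
  have hac1 : a ≠ c - 1 := by
    intro h
    rw [← h, sub_self, ZMod.val_zero] at vca1; omega
  constructor
  · -- first part
    intro h
    by_cases hb : b = c - 1
    · have h0 : dd α b (c - 1) = 0 := by rw [hb, dd, if_pos rfl]
      rw [h0]; exact dd_nonneg hnn _ _
    · have vcb1 : (c - 1 - b).val = C - A - 1 := by
        apply val_eqc ?_ (by omega)
        push_cast [Nat.cast_sub (by omega : A ≤ C), Nat.cast_sub (by omega : 1 ≤ C - A)]
        rw [hcastA, hcastC]; ring
      have hAC2 : A + 2 ≤ C := by
        rcases Nat.lt_or_ge (A + 1) C with h' | h'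
        · omega
        · exfalso; apply hb
          have : C - A - 1 = 0 := by omega
          rw [this] at vcb1
          have := (ZMod.val_eq_zero _).1 vcb1
          linear_combination -this
      have Sa := dd_diff_right α hsym hac hac1
      have Sb := dd_diff_right α hsym hbc hb
      have cond1 : ((a : ZMod n) - (c + 1)).val < (b - (c + 1)).val := by
        have e1 : ((a : ZMod n) - (c + 1)).val = n - C - 1 := by
          apply val_eqc ?_ (by omega)
          push_cast [Nat.cast_sub (by omega : C ≤ n), Nat.cast_sub (by omega : 1 ≤ n - C)]
          rw [hnn0, hcastC]; ring
        have e2 : ((b : ZMod n) - (c + 1)).val = n - C + A - 1 := by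
          apply val_eqc ?_ (by omega)
          push_cast [Nat.cast_sub (by omega : C ≤ n), Nat.cast_sub (by omega : 1 ≤ n - C + A)]
          rw [hnn0, hcastA, hcastC]; ring
        omega
      have cond2 : ((b : ZMod n) - (a + 1)).val < (c - 1 - (a + 1)).val := by
        have e3 : ((b : ZMod n) - (a + 1)).val = A - 1 := by
          apply val_eqc ?_ (by omega)
          push_cast [Nat.cast_sub (by omega : 1 ≤ A)]
          rw [hcastA]; ring
        have e4 : ((c : ZMod n) - 1 - (a + 1)).val = C - 2 := by
          apply val_eqc ?_ (by omega)
          push_cast [Nat.cast_sub (by omega : 2 ≤ C)]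
          rw [hcastC]; ring
        omega
      have split1 := csum_split (fun j => α c j) cond1
      have split2 := csum_split (fun j => α c j) cond2
      have hQ : 0 ≤ csum (fun j => α c j) (a + 1) b := csum_nonneg (fun x => hnn c x) _ _
      linarith
  · -- second part
    intro h
    by_cases hb : b = a + 1
    · have h0 : dd α (a + 1) b = 0 := by rw [hb, dd, if_pos rfl]
      rw [h0]; exact dd_nonneg hnn _ _
    · have vba1 : ((b : ZMod n) - (a + 1)).val = A - 1 := by
        apply val_eqc ?_ (by omega)
        push_cast [Nat.cast_sub (by omega : 1 ≤ A)]
        rw [hcastA]; ring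
      have hA2 : 2 ≤ A := by
        rcases Nat.lt_or_ge 1 A with h' | h'
        · omega
        · exfalso; apply hb
          have : A - 1 = 0 := by omega
          rw [this] at vba1
          have := (ZMod.val_eq_zero _).1 vba1
          linear_combination this
      have hca' : c ≠ a := fun h' => hca (by rw [h', sub_self])
      have hca1 : c ≠ a + 1 := by
        intro h'
        have : ((c : ZMod n) - (a + 1)).val = C - 1 := by
          apply val_eqc ?_ (by omega)
          push_cast [Nat.cast_sub (by omega : 1 ≤ C)]
          rw [hcastC]; ring
        rw [h', sub_self, ZMod.val_zero] at this; omega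
      have Tc := dd_diff_left α hsym hca' hca1
      have Tb := dd_diff_left α hsym hab hb
      have cond3 : ((c : ZMod n) - (b + 1)).val < (a - (b + 1)).val := by
        have e1 : ((c : ZMod n) - (b + 1)).val = C - A - 1 := by
          apply val_eqc ?_ (by omega)
          push_cast [Nat.cast_sub (by omega : A ≤ C), Nat.cast_sub (by omega : 1 ≤ C - A)]
          rw [hcastA, hcastC]; ring
        have e2 : ((a : ZMod n) - (b + 1)).val = n - A - 1 := by
          apply val_eqc ?_ (by omega)
          push_cast [Nat.cast_sub (by omega : A ≤ n), Nat.cast_sub (by omega : 1 ≤ n - A)]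
          rw [hnn0, hcastA]; ring
        omega
      have cond4 : ((b : ZMod n) - (a + 1 + 1)).val < (c - (a + 1 + 1)).val := by
        have e3 : ((b : ZMod n) - (a + 1 + 1)).val = A - 2 := by
          apply val_eqc ?_ (by omega)
          push_cast [Nat.cast_sub (by omega : 2 ≤ A)]
          rw [hcastA]; ring
        have e4 : ((c : ZMod n) - (a + 1 + 1)).val = C - 2 := by
          apply val_eqc ?_ (by omega)
          push_cast [Nat.cast_sub (by omega : 2 ≤ C)]
          rw [hcastC]; ring
        omega
      have split3 := csum_split (fun j => α (a + 1) j) cond3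
      have split4 := csum_split (fun j => α (a + 1) j) cond4
      have hR : 0 ≤ csum (fun j => α (a + 1) j) (b + 1) c := csum_nonneg (fun x => hnn _ x) _ _
      linarith
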